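/- arXiv:2102.02969 — 4 statements merged into one kernel-verified Lean document; each statement's English description precedes it below -/
import Mathlib

section
/- Let g be a standard Gaussian random variable and s an independent random variable. Then E[Sign(g+s)·g] = √(2/π)·E[exp(-s²/2)]. -/
/-!
By independence and Fubini it suffices to show `E[Sign(g + y) g] = 2 φ(y)` for each real `y`,
where `φ` is the standard Gaussian density. Since `x φ(x) = -φ'(x)`, the integral of `x φ(x)`
over `(-y, ∞)` is `φ(-y)` and over `(-∞, -y]` it is `-φ(-y)`; finally
`2 φ(y) = √(2/π) exp(-y²/2)`.
-/

open MeasureTheory ProbabilityTheory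

/-- The sign function: `Sign x = x / |x|` for `x ≠ 0`, `Sign 0 = 0`. -/
noncomputable def signFun (x : ℝ) : ℝ := if x = 0 then 0 else x / |x|

open Set Real

lemma measurable_signFun : Measurable signFun :=
  Measurable.ite (measurableSet_eq_fun measurable_id measurable_const)
    measurable_const (measurable_id.div measurable_id.abs)

lemma signFun_of_neg {x : ℝ} (h : x < 0) : signFun x = -1 := by
  rw [signFun, if_neg h.ne, abs_of_neg h, div_neg, div_self h.ne]

lemma signFun_of_pos {x : ℝ} (h : 0 < x) : signFun x = 1 := by
  rw [signFun, if_neg h.ne', abs_of_pos h, div_self h.ne']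

lemma abs_signFun_mul_le (x a : ℝ) : |signFun x * a| ≤ |a| := by
  rw [abs_mul]
  refine mul_le_of_le_one_left (abs_nonneg a) ?_
  rcases lt_trichotomy x 0 with h | rfl | h
  · simp [signFun_of_neg h]
  · simp [signFun]
  · simp [signFun_of_pos h]

lemma gaussianPDFReal_zero_one (x : ℝ) :
    gaussianPDFReal 0 1 x = (√(2 * π))⁻¹ * exp (-x ^ 2 / 2) := by
  simp [gaussianPDFReal]

lemma gaussianPDFReal_zero_one_neg (x : ℝ) :
    gaussianPDFReal 0 1 (-x) = gaussianPDFReal 0 1 x := by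
  simp only [gaussianPDFReal_zero_one, neg_sq]

lemma two_mul_gaussianPDFReal_zero_one (x : ℝ) :
    2 * gaussianPDFReal 0 1 x = √(2 / π) * exp (-x ^ 2 / 2) := by
  have h : 2 * (√(2 * π))⁻¹ = √(2 / π) := by
    rw [← div_eq_mul_inv, div_eq_iff (by positivity), ← sqrt_mul (by positivity),
      show 2 / π * (2 * π) = 2 ^ 2 by field_simp, sqrt_sq zero_le_two]
  rw [gaussianPDFReal_zero_one, ← mul_assoc, h]

lemma hasDerivAt_gaussianPDFReal_zero_one (x : ℝ) :
    HasDerivAt (gaussianPDFReal 0 1) (-(x * gaussianPDFReal 0 1 x)) x := by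
  rw [funext gaussianPDFReal_zero_one]
  refine ((((hasDerivAt_pow 2 x).neg).div_const 2).exp.const_mul (√(2 * π))⁻¹).congr_deriv ?_
  simp only [Pi.neg_apply, Nat.cast_ofNat]
  ring

lemma integrable_mul_gaussianPDFReal_zero_one :
    Integrable fun x : ℝ ↦ x * gaussianPDFReal 0 1 x := by
  refine ((integrable_mul_exp_neg_mul_sq one_half_pos).const_mul (√(2 * π))⁻¹).congr ?_
  filter_upwards with x
  rw [gaussianPDFReal_zero_one]
  ring_nf

lemma integral_Ioi_mul_gaussianPDFReal_zero_one (a : ℝ) :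
    ∫ x in Ioi a, x * gaussianPDFReal 0 1 x = gaussianPDFReal 0 1 a := by
  have hlim := tendsto_zero_of_hasDerivAt_of_integrableOn_Ioi (a := a)
    (fun x _ ↦ hasDerivAt_gaussianPDFReal_zero_one x)
    integrable_mul_gaussianPDFReal_zero_one.neg.integrableOn
    (integrable_gaussianPDFReal 0 1).integrableOn
  have := integral_Ioi_of_hasDerivAt_of_tendsto' (a := a)
    (fun x _ ↦ hasDerivAt_gaussianPDFReal_zero_one x)
    integrable_mul_gaussianPDFReal_zero_one.neg.integrableOn hlim
  rw [integral_neg] at this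
  linarith

lemma integral_Iic_mul_gaussianPDFReal_zero_one (a : ℝ) :
    ∫ x in Iic a, x * gaussianPDFReal 0 1 x = -gaussianPDFReal 0 1 a := by
  have hlim := tendsto_zero_of_hasDerivAt_of_integrableOn_Iic (a := a)
    (fun x _ ↦ hasDerivAt_gaussianPDFReal_zero_one x)
    integrable_mul_gaussianPDFReal_zero_one.neg.integrableOn
    (integrable_gaussianPDFReal 0 1).integrableOn
  have := integral_Iic_of_hasDerivAt_of_tendsto' (a := a)
    (fun x _ ↦ hasDerivAt_gaussianPDFReal_zero_one x)
    integrable_mul_gaussianPDFReal_zero_one.neg.integrableOn hlim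
  rw [integral_neg] at this
  linarith

lemma integral_signFun_add_mul_gaussianReal (y : ℝ) :
    ∫ x, signFun (x + y) * x ∂gaussianReal 0 1 = 2 * gaussianPDFReal 0 1 y := by
  set h := fun x : ℝ ↦ x * gaussianPDFReal 0 1 x
  have hint : Integrable fun x ↦ signFun (x + y) * h x :=
    integrable_mul_gaussianPDFReal_zero_one.mono
      ((measurable_signFun.comp (measurable_add_const y)).aestronglyMeasurable.mul
        integrable_mul_gaussianPDFReal_zero_one.aestronglyMeasurable)
      (.of_forall fun x ↦ abs_signFun_mul_le _ _)
  have hIic : ∫ x in Iic (-y), signFun (x + y) * h x = ∫ x in Iic (-y), -h x := by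
    rw [integral_Iic_eq_integral_Iio, integral_Iic_eq_integral_Iio]
    refine setIntegral_congr_fun measurableSet_Iio fun x hx ↦ ?_
    rw [signFun_of_neg (by linarith [mem_Iio.mp hx]), neg_one_mul]
  have hIoi : ∫ x in Ioi (-y), signFun (x + y) * h x = ∫ x in Ioi (-y), h x := by
    refine setIntegral_congr_fun measurableSet_Ioi fun x hx ↦ ?_
    rw [signFun_of_pos (by linarith [mem_Ioi.mp hx]), one_mul]
  calc ∫ x, signFun (x + y) * x ∂gaussianReal 0 1
      = ∫ x, signFun (x + y) * h x := by
        rw [integral_gaussianReal_eq_integral_smul one_ne_zero]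
        congr with x
        simp only [h, smul_eq_mul]
        ring
    _ = (∫ x in Iic (-y), signFun (x + y) * h x) + ∫ x in Ioi (-y), signFun (x + y) * h x :=
        (intervalIntegral.integral_Iic_add_Ioi hint.integrableOn hint.integrableOn).symm
    _ = 2 * gaussianPDFReal 0 1 y := by
        rw [hIic, hIoi, integral_neg, integral_Iic_mul_gaussianPDFReal_zero_one,
          integral_Ioi_mul_gaussianPDFReal_zero_one, gaussianPDFReal_zero_one_neg]
        ring

lemma ProbabilityTheory.IndepFun.integral_comp_eq_integral_integral {Ω α β E : Type*}
    [MeasurableSpace Ω] [MeasurableSpace α] [MeasurableSpace β]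
    [NormedAddCommGroup E] [NormedSpace ℝ E]
    {μ : Measure Ω} [IsFiniteMeasure μ] {X : Ω → α} {Y : Ω → β} (hXY : IndepFun X Y μ)
    (hX : AEMeasurable X μ) (hY : AEMeasurable Y μ) {F : α × β → E}
    (hF : Integrable F ((μ.map X).prod (μ.map Y))) :
    ∫ ω, F (X ω, Y ω) ∂μ = ∫ b, ∫ a, F (a, b) ∂μ.map X ∂μ.map Y := by
  rw [← integral_prod_symm F hF, ← hXY.map_prod_eq_prod_map_map hX hY] at *
  exact (integral_map (hX.prodMk hY) hF.aestronglyMeasurable).symm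

theorem sign_gaussian_expectation_general
    {Ω : Type*} [MeasurableSpace Ω] (μ : Measure Ω) [IsProbabilityMeasure μ]
    (g s : Ω → ℝ) (hsm : Measurable s)
    (hg : μ.map g = gaussianReal 0 1) (hind : IndepFun g s μ) :
    ∫ ω, signFun (g ω + s ω) * g ω ∂μ
      = Real.sqrt (2 / Real.pi) * ∫ ω, Real.exp (-(s ω) ^ 2 / 2) ∂μ := by
  have hgm : AEMeasurable g μ := .of_map_ne_zero (hg ▸ IsProbabilityMeasure.ne_zero _)
  have hF : Integrable (fun p : ℝ × ℝ ↦ signFun (p.1 + p.2) * p.1)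
      ((μ.map g).prod (μ.map s)) := by
    rw [hg]
    refine ((memLp_id_gaussianReal 1).integrable le_rfl |>.comp_fst _).mono
      ((measurable_signFun.comp measurable_add).aestronglyMeasurable.mul
        measurable_fst.aestronglyMeasurable) (.of_forall fun p ↦ abs_signFun_mul_le _ _)
  calc ∫ ω, signFun (g ω + s ω) * g ω ∂μ
      = ∫ y, ∫ x, signFun (x + y) * x ∂gaussianReal 0 1 ∂μ.map s := by
        rw [hind.integral_comp_eq_integral_integral hgm hsm.aemeasurable hF, hg]
    _ = ∫ y, √(2 / π) * exp (-y ^ 2 / 2) ∂μ.map s := by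
        simp only [integral_signFun_add_mul_gaussianReal, two_mul_gaussianPDFReal_zero_one]
    _ = √(2 / π) * ∫ ω, exp (-(s ω) ^ 2 / 2) ∂μ := by
        rw [integral_const_mul, integral_map hsm.aemeasurable (by fun_prop)]

/-- If `g` is a standard Gaussian random variable and `s` is independent of `g`, then
`E[Sign(g+s)·g] = √(2/π) · E[exp(-s²/2)]`. -/
theorem sign_gaussian_expectation
    {Ω : Type*} [MeasurableSpace Ω] (μ : Measure Ω) [IsProbabilityMeasure μ]
    (g s : Ω → ℝ) (hgm : Measurable g) (hsm : Measurable s)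
    (hg : μ.map g = gaussianReal 0 1) (hind : IndepFun g s μ) :
    ∫ ω, signFun (g ω + s ω) * g ω ∂μ
      = Real.sqrt (2 / Real.pi) * ∫ ω, Real.exp (-(s ω) ^ 2 / 2) ∂μ :=
  sign_gaussian_expectation_general μ g s hsm hg hind
end

section
/- Let α, β, c ≥ 0 satisfy |α|·|α² + β² - 1| ≤ c and |β|·(α² + β²) ≤ c, with c < 1/(4√2). Then either α² + β² ≤ 2c^{2/3}, or |α² - 1| ≤ 2c^{2/3} and β ≤ c^{1/3}. -/
lemma prod_split (c x y : ℝ) (hc : 0 ≤ c) (hx : 0 ≤ x) (hy : 0 ≤ y)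
    (h : x * y ≤ c) : x ≤ c ^ ((1 : ℝ) / 3) ∨ y ≤ c ^ ((2 : ℝ) / 3) := by
  by_contra h'
  push_neg at h'
  obtain ⟨hx1, hy1⟩ := h'
  have key : c ^ ((1 : ℝ) / 3) * c ^ ((2 : ℝ) / 3) < x * y :=
    mul_lt_mul'' hx1 hy1 (Real.rpow_nonneg hc _) (Real.rpow_nonneg hc _)
  rw [← Real.rpow_add' hc (by norm_num)] at key
  norm_num at key
  linarith

lemma sq_le_23 (c x : ℝ) (hc : 0 ≤ c) (hx : 0 ≤ x) (h : x ≤ c ^ ((1 : ℝ) / 3)) :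
    x ^ 2 ≤ c ^ ((2 : ℝ) / 3) := by
  have := pow_le_pow_left₀ hx h 2
  calc x ^ 2 ≤ (c ^ ((1 : ℝ) / 3)) ^ 2 := this
    _ = c ^ ((2 : ℝ) / 3) := by
        rw [← Real.rpow_natCast (c ^ ((1:ℝ)/3)) 2, ← Real.rpow_mul hc]
        norm_num

/-- Case analysis for critical points of robust rank-1 matrix recovery: if
`|α|·|α²+β²-1| ≤ c` and `|β|·(α²+β²) ≤ c` with `0 ≤ α, β, c` and `c < 1/(4√2)`,
then either `α²+β² ≤ 2c^(2/3)`, or `|α²-1| ≤ 2c^(2/3)` and `β ≤ c^(1/3)`. -/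
theorem critical_point_cases (α β c : ℝ)
    (hα : 0 ≤ α) (hβ : 0 ≤ β) (hc : 0 ≤ c) (hc' : c < 1 / (4 * Real.sqrt 2))
    (h1 : |α| * |α ^ 2 + β ^ 2 - 1| ≤ c)
    (h2 : |β| * (α ^ 2 + β ^ 2) ≤ c) :
    α ^ 2 + β ^ 2 ≤ 2 * c ^ ((2 : ℝ) / 3)
    ∨ (|α ^ 2 - 1| ≤ 2 * c ^ ((2 : ℝ) / 3) ∧ β ≤ c ^ ((1 : ℝ) / 3)) := by
  rw [abs_of_nonneg hα] at h1
  rw [abs_of_nonneg hβ] at h2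
  have hs : 0 ≤ α ^ 2 + β ^ 2 := by positivity
  rcases prod_split c β (α ^ 2 + β ^ 2) hc hβ hs h2 with hb | hsle
  · rcases prod_split c α |α ^ 2 + β ^ 2 - 1| hc hα (abs_nonneg _) h1 with ha | habs
    · left
      have h3 := sq_le_23 c α hc hα ha
      have h4 := sq_le_23 c β hc hβ hb
      linarith
    · right
      refine ⟨?_, hb⟩
      have h4 := sq_le_23 c β hc hβ hb
      have : |α ^ 2 - 1| ≤ |α ^ 2 + β ^ 2 - 1| + β ^ 2 := by
        have := abs_sub (α ^ 2 + β ^ 2 - 1) (β ^ 2)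
        have h5 : |(β:ℝ) ^ 2| = β ^ 2 := abs_of_nonneg (by positivity)
        calc |α ^ 2 - 1| = |(α ^ 2 + β ^ 2 - 1) - β ^ 2| := by ring_nf
          _ ≤ |α ^ 2 + β ^ 2 - 1| + |β ^ 2| := abs_sub _ _
          _ = |α ^ 2 + β ^ 2 - 1| + β ^ 2 := by rw [h5]
      linarith
  · left
    have : 0 ≤ c ^ ((2 : ℝ) / 3) := Real.rpow_nonneg hc _
    linarith
end

section
/- Let S_r = {X ∈ ℝ^{d×d} : rank(X) ≤ r, ‖X‖_F = 1}. For every ε ∈ (0,1], there exists an ε-net of S_r with respect to the Frobenius norm of cardinality at most (9/ε)^{(2d+1)r}. -/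
/-- Frobenius inner product. -/
noncomputable def frobInner {d : ℕ} (X Y : Matrix (Fin d) (Fin d) ℝ) : ℝ :=
  ∑ i, ∑ j, X i j * Y i j

/-- Frobenius norm. -/
noncomputable def frobNorm {d : ℕ} (X : Matrix (Fin d) (Fin d) ℝ) : ℝ :=
  Real.sqrt (frobInner X X)

/-!
A matrix `X` of rank at most `r` with `‖X‖_F = 1` factors as `X = U M` with `U : ℝʳ → ℝᵈ` an
isometric embedding and `‖M‖_F = 1`. The isometries lie in the unit ball of the `rd`-dimensional
space of operators, and the matrices `M` on the unit sphere of an `rd`-dimensional Euclidean space,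
so the volumetric argument gives `ε/2`-nets of both of size `(1 + 4/ε)^(rd)`. Since
`‖UM - U'M'‖_F ≤ ‖U - U'‖ ‖M‖_F + ‖U'‖ ‖M - M'‖_F`, the products `U'M'` form an `ε`-net of size
`(1 + 4/ε)^(2rd) ≤ (9/ε)^((2d+1)r)`.
-/

open Metric Module MeasureTheory Submodule
open scoped NNReal ENNReal

section Volumetric

variable {E : Type*} [NormedAddCommGroup E] [NormedSpace ℝ E] [FiniteDimensional ℝ E]

/-- The balls of radius `δ / 2` around the points of `C` are disjoint and lie in the ball of radius
`1 + δ / 2`, so comparing Haar measures bounds `#C`. -/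
theorem Finset.card_le_of_isSeparated_of_subset_closedBall {C : Finset E}
    (hC : (C : Set E) ⊆ closedBall 0 1) {δ : ℝ≥0} (hδ : 0 < δ) (hsep : IsSeparated δ (C : Set E)) :
    (C.card : ℝ) ≤ (1 + 2 / δ) ^ finrank ℝ E := by
  let _ : MeasurableSpace E := borel E
  have _ : BorelSpace E := ⟨rfl⟩
  set μ : Measure E := (finBasis ℝ E).addHaar
  set ρ : ℝ := δ / 2
  have hρ : 0 < ρ := by positivity
  have hdisj : (C : Set E).PairwiseDisjoint (closedBall · ρ) := fun x hx y hy hxy =>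
    closedBall_disjoint_closedBall <| by
      have h : (δ : ℝ≥0∞) < edist x y := hsep hx hy hxy
      rw [edist_nndist, ENNReal.coe_lt_coe, ← NNReal.coe_lt_coe, coe_nndist] at h
      rwa [add_halves]
  have hsub : (⋃ x ∈ C, closedBall x ρ) ⊆ closedBall 0 (1 + ρ) := by
    simp only [Set.iUnion_subset_iff]
    intro x hx
    simpa using closedBall_subset_closedBall' (by linarith [mem_closedBall.1 (hC hx)])
  have hvol : (C.card : ℝ≥0∞) * ENNReal.ofReal (ρ ^ finrank ℝ E) * μ (ball 0 1)
      ≤ ENNReal.ofReal ((1 + ρ) ^ finrank ℝ E) * μ (ball 0 1) :=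
    calc (C.card : ℝ≥0∞) * ENNReal.ofReal (ρ ^ finrank ℝ E) * μ (ball 0 1)
        = ∑ x ∈ C, μ (closedBall x ρ) := by
          simp [μ.addHaar_closedBall _ hρ.le, mul_assoc]
      _ = μ (⋃ x ∈ C, closedBall x ρ) :=
          (measure_biUnion_finset hdisj fun x _ => measurableSet_closedBall).symm
      _ ≤ μ (closedBall 0 (1 + ρ)) := measure_mono hsub
      _ = _ := μ.addHaar_closedBall 0 (by positivity)
  rw [ENNReal.mul_le_mul_iff_left (measure_ball_pos μ 0 one_pos).ne' measure_ball_lt_top.ne,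
    ← ENNReal.ofReal_natCast, ← ENNReal.ofReal_mul (by positivity),
    ENNReal.ofReal_le_ofReal_iff (by positivity), ← le_div_iff₀ (by positivity), ← div_pow] at hvol
  calc (C.card : ℝ) ≤ ((1 + ρ) / ρ) ^ finrank ℝ E := hvol
    _ = (1 + 2 / δ) ^ finrank ℝ E := by
      congr 1
      simp only [ρ]
      field_simp
      ring

theorem packingNumber_le_of_subset_closedBall {A : Set E} (hA : A ⊆ closedBall 0 1) {δ : ℝ≥0}
    (hδ : 0 < δ) : packingNumber δ A ≤ ⌊(1 + 2 / (δ : ℝ)) ^ finrank ℝ E⌋₊ := by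
  refine iSup₂_le fun C hCA => iSup_le fun hsep => ?_
  have hbound : ∀ F : Finset E, (F : Set E) ⊆ C → F.card ≤ ⌊(1 + 2 / (δ : ℝ)) ^ finrank ℝ E⌋₊ :=
    fun F hF => Nat.le_floor <| F.card_le_of_isSeparated_of_subset_closedBall
      ((hF.trans hCA).trans hA) hδ (hsep.subset hF)
  obtain hfin | hinf := C.finite_or_infinite
  · rw [hfin.encard_eq_coe_toFinset_card, Nat.cast_le]
    exact hbound _ hfin.coe_toFinset.subset
  · obtain ⟨F, hF, hcard⟩ := hinf.exists_subset_card_eq (⌊(1 + 2 / (δ : ℝ)) ^ finrank ℝ E⌋₊ + 1)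
    exact absurd (hbound F hF) (by omega)

theorem exists_finset_subset_card_le_forall_dist_le {A : Set E} (hA : A ⊆ closedBall 0 1)
    {δ : ℝ} (hδ : 0 < δ) :
    ∃ N : Finset E, ↑N ⊆ A ∧ (N.card : ℝ) ≤ (1 + 2 / δ) ^ finrank ℝ E ∧
      ∀ x ∈ A, ∃ y ∈ N, dist x y ≤ δ := by
  lift δ to ℝ≥0 using hδ.le
  have hcov := (coveringNumber_le_packingNumber δ A).trans
    (packingNumber_le_of_subset_closedBall hA (δ := δ) (by exact_mod_cast hδ))
  obtain ⟨C, hCA, hC, hcover, hcard⟩ :=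
    exists_set_encard_eq_coveringNumber (ne_top_of_le_ne_top (ENat.natCast_ne_top _) hcov)
  refine ⟨hC.toFinset, by simpa using hCA, ?_, fun x hx => ?_⟩
  · rw [hC.encard_eq_coe_toFinset_card] at hcard
    exact (Nat.le_floor_iff (by positivity)).1 (by exact_mod_cast hcard.le.trans hcov)
  · obtain ⟨y, hy, hxy⟩ := hcover hx
    have hxy : edist x y ≤ δ := hxy
    rw [edist_le_coe, ← NNReal.coe_le_coe, coe_nndist] at hxy
    exact ⟨y, hC.mem_toFinset.2 hy, hxy⟩

end Volumetric

theorem Submodule.exists_le_finrank_eq {K V : Type*} [DivisionRing K] [AddCommGroup V] [Module K V]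
    [FiniteDimensional K V] (W : Submodule K V) {k : ℕ} (hWk : finrank K W ≤ k)
    (hk : k ≤ finrank K V) : ∃ W' : Submodule K V, W ≤ W' ∧ finrank K W' = k := by
  induction k with
  | zero => exact ⟨W, le_rfl, by omega⟩
  | succ k ih =>
    rcases hWk.eq_or_lt with h | h
    · exact ⟨W, le_rfl, h⟩
    obtain ⟨W₁, hW₁, hk₁⟩ := ih (by omega) (by omega)
    obtain ⟨v, hv⟩ : ∃ v, v ∉ W₁ := by
      by_contra! hall
      rw [(eq_top_iff.2 fun v _ => hall v : W₁ = ⊤), finrank_top] at hk₁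
      omega
    exact ⟨W₁ ⊔ span K {v}, hW₁.trans le_sup_left, by rw [finrank_sup_span_singleton hv, hk₁]⟩

namespace PiLp

variable {ι E F : Type*}

section Norm

variable [Fintype ι] [SeminormedAddCommGroup E] [SeminormedAddCommGroup F]
  {x : PiLp 2 fun _ : ι => E} {y : PiLp 2 fun _ : ι => F}

theorem norm_le_mul_of_forall_norm_le {c : ℝ} (hc : 0 ≤ c) (h : ∀ i, ‖x i‖ ≤ c * ‖y i‖) :
    ‖x‖ ≤ c * ‖y‖ := by
  refine le_of_sq_le_sq ?_ (by positivity)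
  rw [mul_pow, norm_sq_eq_of_L2, norm_sq_eq_of_L2, Finset.mul_sum]
  exact Finset.sum_le_sum fun i _ => by
    rw [← mul_pow]; exact pow_le_pow_left₀ (norm_nonneg _) (h i) 2

theorem norm_eq_of_forall_norm_eq (h : ∀ i, ‖x i‖ = ‖y i‖) : ‖x‖ = ‖y‖ := by
  simp only [norm_eq_of_L2, h]

end Norm

variable [NormedAddCommGroup E] [NormedSpace ℝ E] [NormedAddCommGroup F] [NormedSpace ℝ F]

def mapCLM (T : E →L[ℝ] F) (m : PiLp 2 fun _ : ι => E) : PiLp 2 fun _ : ι => F :=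
  WithLp.toLp 2 fun i => T (m i)

@[simp]
theorem mapCLM_apply (T : E →L[ℝ] F) (m : PiLp 2 fun _ : ι => E) (i : ι) :
    mapCLM T m i = T (m i) := rfl

theorem finrank_span_range_mapCLM_le [FiniteDimensional ℝ E] (T : E →L[ℝ] F)
    (m : PiLp 2 fun _ : ι => E) : finrank ℝ (span ℝ (Set.range (mapCLM T m))) ≤ finrank ℝ E := by
  refine (Submodule.finrank_mono ?_).trans (LinearMap.finrank_range_le (T : E →ₗ[ℝ] F))
  exact span_le.2 <| Set.range_subset_iff.2 fun i => ⟨m i, rfl⟩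

variable [Fintype ι]

theorem norm_mapCLM_le (T : E →L[ℝ] F) (m : PiLp 2 fun _ : ι => E) :
    ‖mapCLM T m‖ ≤ ‖T‖ * ‖m‖ :=
  norm_le_mul_of_forall_norm_le (norm_nonneg T) fun i => T.le_opNorm (m i)

theorem norm_mapCLM_of_isometry {T : E →L[ℝ] F} (hT : ∀ v, ‖T v‖ = ‖v‖)
    (m : PiLp 2 fun _ : ι => E) : ‖mapCLM T m‖ = ‖m‖ :=
  norm_eq_of_forall_norm_eq fun i => hT (m i)

theorem dist_mapCLM_mapCLM_le {T T' : E →L[ℝ] F} {m m' : PiLp 2 fun _ : ι => E}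
    (hm : ‖m‖ ≤ 1) (hT' : ‖T'‖ ≤ 1) :
    dist (mapCLM T m) (mapCLM T' m') ≤ dist T T' + dist m m' := by
  have hsplit : mapCLM T m - mapCLM T' m' = mapCLM (T - T') m + mapCLM T' (m - m') := by
    ext i; simp
  rw [dist_eq_norm, dist_eq_norm, dist_eq_norm, hsplit]
  calc _ ≤ ‖T - T'‖ * ‖m‖ + ‖T'‖ * ‖m - m'‖ :=
        (norm_add_le _ _).trans (add_le_add (norm_mapCLM_le _ _) (norm_mapCLM_le _ _))
    _ ≤ ‖T - T'‖ * 1 + 1 * ‖m - m'‖ := by gcongr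
    _ = _ := by ring

theorem finrank_const (E : Type*) [NormedAddCommGroup E] [NormedSpace ℝ E]
    [FiniteDimensional ℝ E] : finrank ℝ (PiLp 2 fun _ : ι => E) = Fintype.card ι * finrank ℝ E := by
  rw [(WithLp.linearEquiv 2 ℝ (ι → E)).finrank_eq, finrank_pi_fintype, Finset.sum_const,
    Finset.card_univ, smul_eq_mul]

end PiLp

theorem finrank_continuousLinearMap (E F : Type*) [NormedAddCommGroup E] [NormedSpace ℝ E]
    [FiniteDimensional ℝ E] [NormedAddCommGroup F] [NormedSpace ℝ F] [FiniteDimensional ℝ F] :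
    finrank ℝ (E →L[ℝ] F) = finrank ℝ E * finrank ℝ F := by
  rw [← (LinearMap.toContinuousLinearMap : (E →ₗ[ℝ] F) ≃ₗ[ℝ] _).finrank_eq, finrank_linearMap]

section LowRank

variable (ι F : Type*) [Fintype ι] [NormedAddCommGroup F] [InnerProductSpace ℝ F]
  [FiniteDimensional ℝ F]

/-- `S_r`, seen through the columns of its matrices. -/
def lowRankSphere (r : ℕ) : Set (PiLp 2 fun _ : ι => F) :=
  {x | ‖x‖ = 1 ∧ finrank ℝ (span ℝ (Set.range x)) ≤ r}

variable {ι F}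

theorem exists_isometry_mapCLM_eq {E : Type*} [NormedAddCommGroup E] [InnerProductSpace ℝ E]
    [FiniteDimensional ℝ E] (x : PiLp 2 fun _ : ι => F)
    (hx : finrank ℝ (span ℝ (Set.range x)) ≤ finrank ℝ E) (hEF : finrank ℝ E ≤ finrank ℝ F) :
    ∃ U : E →ₗᵢ[ℝ] F, ∃ m : PiLp 2 fun _ : ι => E,
      PiLp.mapCLM U.toContinuousLinearMap m = x ∧ ‖m‖ = ‖x‖ := by
  obtain ⟨W, hxW, hW⟩ := (span ℝ (Set.range x)).exists_le_finrank_eq hx hEF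
  let e : E ≃ₗᵢ[ℝ] W := (stdOrthonormalBasis ℝ E).repr.trans
    ((stdOrthonormalBasis ℝ W).reindex (finCongr hW)).repr.symm
  have hxW' : ∀ i, x i ∈ W := fun i => hxW (subset_span ⟨i, rfl⟩)
  let m : PiLp 2 fun _ : ι => E := WithLp.toLp 2 fun i => e.symm ⟨x i, hxW' i⟩
  refine ⟨W.subtypeₗᵢ.comp e.toLinearIsometry, m, ?_, PiLp.norm_eq_of_forall_norm_eq fun i => ?_⟩
  · ext i; simp [m]
  · simp [m]

theorem exists_finset_subset_lowRankSphere (r : ℕ) {ε : ℝ} (hε : 0 < ε) :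
    ∃ N : Finset (PiLp 2 fun _ : ι => F), ↑N ⊆ lowRankSphere ι F r ∧
      (N.card : ℝ) ≤ (1 + 4 / ε) ^ (r * (finrank ℝ F + Fintype.card ι)) ∧
      ∀ x ∈ lowRankSphere ι F r, ∃ y ∈ N, dist x y ≤ ε := by
  classical
  set k := min r (finrank ℝ F)
  let E := EuclideanSpace ℝ (Fin k)
  have hE : finrank ℝ E = k := finrank_euclideanSpace_fin
  let isometries : Set (E →L[ℝ] F) := {T | ∀ v, ‖T v‖ = ‖v‖}
  have hisometries : isometries ⊆ closedBall 0 1 := fun T hT =>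
    mem_closedBall_zero_iff.2 <| T.opNorm_le_bound zero_le_one fun v => by rw [hT v, one_mul]
  obtain ⟨NU, hNU, hNU_card, hNU_net⟩ :=
    exists_finset_subset_card_le_forall_dist_le hisometries (half_pos hε)
  obtain ⟨Nm, hNm, hNm_card, hNm_net⟩ := exists_finset_subset_card_le_forall_dist_le
    (sphere_subset_closedBall (x := (0 : PiLp 2 fun _ : ι => E)) (ε := 1)) (half_pos hε)
  rw [finrank_continuousLinearMap, hE, show 2 / (ε / 2) = 4 / ε by ring] at hNU_card
  rw [PiLp.finrank_const, hE, show 2 / (ε / 2) = 4 / ε by ring] at hNm_card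
  refine ⟨(NU ×ˢ Nm).image fun p => PiLp.mapCLM p.1 p.2, ?_, ?_, ?_⟩
  · simp only [Finset.coe_image, Set.image_subset_iff]
    rintro ⟨U, m⟩ hUm
    obtain ⟨hU, hm⟩ := Finset.mem_product.1 hUm
    refine ⟨?_, (PiLp.finrank_span_range_mapCLM_le U m).trans (hE.trans_le (min_le_left _ _))⟩
    rw [PiLp.norm_mapCLM_of_isometry (hNU hU)]
    simpa using hNm hm
  · calc ((NU ×ˢ Nm).image fun p => PiLp.mapCLM p.1 p.2).card
        ≤ ((NU.card * Nm.card : ℕ) : ℝ) := by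
          exact_mod_cast Finset.card_image_le.trans (Finset.card_product NU Nm).le
      _ ≤ (1 + 4 / ε) ^ (k * finrank ℝ F) * (1 + 4 / ε) ^ (Fintype.card ι * k) := by
          push_cast; exact mul_le_mul hNU_card hNm_card (by positivity) (by positivity)
      _ ≤ (1 + 4 / ε) ^ (r * (finrank ℝ F + Fintype.card ι)) := by
          rw [← pow_add]
          refine pow_le_pow_right₀ (le_add_of_nonneg_right (by positivity)) ?_
          have : k ≤ r := min_le_left _ _
          nlinarith
  · rintro x ⟨hx1, hxr⟩
    obtain ⟨U, m, rfl, hm⟩ := exists_isometry_mapCLM_eq (E := E) x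
      ((le_min hxr (finrank_le _)).trans_eq hE.symm) (hE.trans_le (min_le_right _ _))
    obtain ⟨U', hU', hUU'⟩ := hNU_net U.toContinuousLinearMap fun v => U.norm_map v
    obtain ⟨m', hm', hmm'⟩ := hNm_net m (mem_sphere_zero_iff_norm.2 (hm.trans hx1))
    refine ⟨PiLp.mapCLM U' m',
      Finset.mem_image.2 ⟨(U', m'), Finset.mem_product.2 ⟨hU', hm'⟩, rfl⟩, ?_⟩
    calc _ ≤ dist U.toContinuousLinearMap U' + dist m m' :=
          PiLp.dist_mapCLM_mapCLM_le (hm.trans hx1).le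
            (mem_closedBall_zero_iff.1 (hisometries (hNU hU')))
      _ ≤ ε := by linarith

end LowRank

namespace Matrix

variable {m n : Type*}

def colsEquiv : Matrix m n ℝ ≃ₗ[ℝ] PiLp 2 fun _ : n => EuclideanSpace ℝ m where
  toFun X := WithLp.toLp 2 fun j => WithLp.toLp 2 fun i => X i j
  invFun x := of fun i j => x j i
  map_add' _ _ := rfl
  map_smul' _ _ := rfl
  left_inv _ := rfl
  right_inv _ := rfl

@[simp]
theorem colsEquiv_apply (X : Matrix m n ℝ) (j : n) (i : m) : colsEquiv X j i = X i j := rfl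

theorem rank_eq_finrank_span_colsEquiv [Fintype n] (X : Matrix m n ℝ) :
    X.rank = finrank ℝ (span ℝ (Set.range (colsEquiv X))) := by
  have : Set.range (colsEquiv X) = (WithLp.linearEquiv 2 ℝ (m → ℝ)).symm '' Set.range X.col := by
    rw [← Set.range_comp]; rfl
  rw [rank_eq_finrank_span_cols, this, ← LinearEquiv.coe_coe, span_image,
    LinearEquiv.finrank_map_eq]

end Matrix

theorem frobNorm_eq_norm_colsEquiv {d : ℕ} (X : Matrix (Fin d) (Fin d) ℝ) :
    frobNorm X = ‖Matrix.colsEquiv X‖ := by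
  rw [frobNorm, frobInner, PiLp.norm_eq_of_L2, Finset.sum_comm]
  congr 1
  refine Finset.sum_congr rfl fun j _ => ?_
  rw [EuclideanSpace.norm_eq, Real.sq_sqrt (by positivity)]
  simp [sq]

/-- The set of rank-`≤ r` unit-Frobenius-norm `d×d` matrices admits an `ε`-net of
cardinality at most `(9/ε)^((2d+1)r)`. -/
theorem low_rank_sphere_covering
    (d r : ℕ) (ε : ℝ) (hε0 : 0 < ε) (hε1 : ε ≤ 1) :
    ∃ N : Finset (Matrix (Fin d) (Fin d) ℝ),
      (∀ X ∈ N, X.rank ≤ r ∧ frobNorm X = 1)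
      ∧ (N.card : ℝ) ≤ (9 / ε) ^ ((2 * d + 1) * r)
      ∧ ∀ X : Matrix (Fin d) (Fin d) ℝ, X.rank ≤ r → frobNorm X = 1 →
          ∃ Xbar ∈ N, frobNorm (X - Xbar) ≤ ε := by
  obtain ⟨N, hN, hcard, hnet⟩ :=
    exists_finset_subset_lowRankSphere (ι := Fin d) (F := EuclideanSpace ℝ (Fin d)) r hε0
  rw [finrank_euclideanSpace_fin, Fintype.card_fin] at hcard
  refine ⟨N.image Matrix.colsEquiv.symm, ?_, ?_, fun X hXr hX1 => ?_⟩
  · simp only [Finset.mem_image]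
    rintro _ ⟨x, hx, rfl⟩
    rw [Matrix.rank_eq_finrank_span_colsEquiv, frobNorm_eq_norm_colsEquiv,
      LinearEquiv.apply_symm_apply]
    exact (hN hx).symm
  · have hbase : 1 + 4 / ε ≤ 9 / ε := by
      rw [show 9 / ε = 5 / ε + 4 / ε by ring, add_le_add_iff_right, le_div_iff₀ hε0]
      linarith
    calc ((N.image Matrix.colsEquiv.symm).card : ℝ) ≤ N.card := by
          exact_mod_cast Finset.card_image_le
      _ ≤ (9 / ε) ^ (r * (d + d)) := hcard.trans (pow_le_pow_left₀ (by positivity) hbase _)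
      _ ≤ (9 / ε) ^ ((2 * d + 1) * r) :=
          pow_le_pow_right₀ (hbase.trans' (le_add_of_nonneg_right (by positivity))) (by nlinarith)
  · obtain ⟨y, hy, hXy⟩ := hnet (Matrix.colsEquiv X)
      ⟨by rw [← frobNorm_eq_norm_colsEquiv, hX1], by rwa [← Matrix.rank_eq_finrank_span_colsEquiv]⟩
    refine ⟨Matrix.colsEquiv.symm y, Finset.mem_image_of_mem _ hy, ?_⟩
    rwa [frobNorm_eq_norm_colsEquiv, map_sub, LinearEquiv.apply_symm_apply, ← dist_eq_norm]
end

section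
/- For real x ∈ [-1, 1/(r-1)) and r ≥ 1, (1+x)^r ≤ 1 + rx/(1 - (r-1)x). -/
/-!
Bernoulli's inequality `(1 + s) ^ r ≥ 1 + r s` at `s = 1 / u - 1`, multiplied through by `u ^ r * u`,
becomes `u ^ r * (r - (r - 1) u) ≤ u` for every `u ≥ 0`. For `u = 1 + x` the factor `r - (r - 1) u`
is `1 - (r - 1) x > 0`; dividing by it gives the claim, as
`1 + r x / (1 - (r - 1) x) = (1 + x) / (1 - (r - 1) x)`.
-/

namespace Real

theorem rpow_mul_sub_mul_le_self {u r : ℝ} (hu : 0 ≤ u) (hr : 1 ≤ r) :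
    u ^ r * (r - (r - 1) * u) ≤ u := by
  rcases hu.eq_or_lt with rfl | hu
  · simp [zero_rpow (by linarith : r ≠ 0)]
  have hs : -1 ≤ u⁻¹ - 1 := by linarith [inv_pos.2 hu]
  have bernoulli : 1 + r * (u⁻¹ - 1) ≤ (u ^ r)⁻¹ := by
    simpa [inv_rpow hu.le] using one_add_mul_self_le_rpow_one_add hs hr
  have hur : 0 < u ^ r := rpow_pos_of_pos hu r
  calc u ^ r * (r - (r - 1) * u)
      = u ^ r * u * (1 + r * (u⁻¹ - 1)) := by field_simp; ring
    _ ≤ u ^ r * u * (u ^ r)⁻¹ := by gcongr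
    _ = u := by field_simp

end Real

theorem sub_mul_pos_of_lt_one_div_sub {x r : ℝ} (hr : 1 ≤ r) (hx : x < 1 / (r - 1)) :
    0 < 1 - (r - 1) * x := by
  rcases hr.eq_or_lt with rfl | hr
  · norm_num
  have hr1 : 0 < r - 1 := sub_pos.2 hr
  linarith [(lt_div_iff₀' hr1).1 hx]

/-- Bernoulli-type inequality: for `x ∈ [-1, 1/(r-1))` and `r ≥ 1`,
`(1+x)^r ≤ 1 + rx/(1-(r-1)x)`. -/
theorem bernoulli_upper (x r : ℝ) (hr : 1 ≤ r)
    (hx1 : -1 ≤ x) (hx2 : x < 1 / (r - 1)) :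
    (1 + x) ^ r ≤ 1 + r * x / (1 - (r - 1) * x) := by
  have hD := sub_mul_pos_of_lt_one_div_sub hr hx2
  have key := Real.rpow_mul_sub_mul_le_self (by linarith : 0 ≤ 1 + x) hr
  have rhs : 1 + r * x / (1 - (r - 1) * x) = (1 + x) / (1 - (r - 1) * x) := by
    rw [eq_div_iff hD.ne', add_mul, div_mul_cancel₀ _ hD.ne']
    ring
  rw [rhs, le_div_iff₀ hD]
  linarith
end
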